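/- arXiv:2008.11590 — 3 statements merged into one kernel-verified Lean document; each statement's English description precedes it below -/
import Mathlib

section
/- The Peregrine breather B_P satisfies M[B_P] = ∫_ℝ (|B_P(t,x)|² - 1) dx = 0 for every t ∈ ℝ. -/
open Complex

/-- Partial derivative in the first (time) variable. -/
noncomputable def pdt (u : ℝ → ℝ → ℂ) (t x : ℝ) : ℂ := deriv (fun s => u s x) t

/-- Partial derivative in the second (space) variable. -/
noncomputable def pdx (u : ℝ → ℝ → ℂ) (t x : ℝ) : ℂ := deriv (fun y => u t y) x

/-- `u` solves the cubic focusing NLS `i u_t + u_xx + |u|² u = 0`. -/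
def IsNLSSolution (u : ℝ → ℝ → ℂ) : Prop :=
  ∀ t x : ℝ, Complex.I * pdt u t x + pdx (pdx u) t x
    + ((‖u t x‖ : ℂ))^2 * u t x = 0

/-- The Peregrine breather. -/
noncomputable def BP (t x : ℝ) : ℂ :=
  Complex.exp (Complex.I * t) *
    (1 - 4 * (1 + 2 * Complex.I * t) / (1 + 4 * (t:ℂ)^2 + 2 * (x:ℂ)^2))

/-! The mass density is an exact derivative: with `c = (1 + 4t²)/2`,
`|B_P(t,x)|² - 1 = 4 (c - x²)/(x² + c)² = ∂ₓ (4x/(x² + c))`, and the primitive `4x/(x² + c)`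
tends to `0` at both ends of the line. -/

open Filter Topology MeasureTheory

section
variable {c : ℝ}

lemma hasDerivAt_div_sq_add {x : ℝ} (hden : x ^ 2 + c ≠ 0) :
    HasDerivAt (fun y : ℝ => y / (y ^ 2 + c)) ((c - x ^ 2) / (x ^ 2 + c) ^ 2) x := by
  refine ((hasDerivAt_id' x).div ((hasDerivAt_pow 2 x).add_const c) hden).congr_deriv ?_
  push_cast
  ring

lemma tendsto_div_sq_add_cocompact (hc : 0 ≤ c) :
    Tendsto (fun y : ℝ => y / (y ^ 2 + c)) (cocompact ℝ) (𝓝 0) := by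
  refine squeeze_zero_norm (fun y => ?_) tendsto_norm_cocompact_atTop.inv_tendsto_atTop
  rcases eq_or_ne y 0 with rfl | hy
  · simp
  rw [norm_div, Real.norm_of_nonneg (by positivity : 0 ≤ y ^ 2 + c), ← sq_abs, Real.norm_eq_abs]
  calc |y| / (|y| ^ 2 + c) ≤ |y| / |y| ^ 2 := by gcongr; linarith
    _ = |y|⁻¹ := by field_simp

lemma integrable_inv_sq_add (hc : 0 < c) : Integrable fun x : ℝ => (x ^ 2 + c)⁻¹ := by
  have hs : Real.sqrt c ≠ 0 := (Real.sqrt_pos.2 hc).ne'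
  refine ((integrable_inv_one_add_sq.comp_div hs).const_mul c⁻¹).congr
    (Eventually.of_forall fun x => ?_)
  field_simp
  rw [Real.sq_sqrt hc.le]
  ring

lemma integrable_sub_sq_div_sq_add_sq (hc : 0 < c) :
    Integrable fun x : ℝ => (c - x ^ 2) / (x ^ 2 + c) ^ 2 := by
  have hden (x : ℝ) : 0 < x ^ 2 + c := by positivity
  have hcont : Continuous fun x : ℝ => (c - x ^ 2) / (x ^ 2 + c) ^ 2 := by
    fun_prop (disch := exact fun x => (pow_pos (hden x) 2).ne')
  refine (integrable_inv_sq_add hc).mono' hcont.aestronglyMeasurable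
    (Eventually.of_forall fun x => ?_)
  rw [Real.norm_eq_abs, abs_div, abs_of_pos (pow_pos (hden x) 2), div_le_iff₀ (pow_pos (hden x) 2),
    abs_le]
  constructor <;> field_simp <;> nlinarith

lemma integral_sub_sq_div_sq_add_sq (hc : 0 < c) :
    ∫ x : ℝ, (c - x ^ 2) / (x ^ 2 + c) ^ 2 = 0 := by
  have := integral_of_hasDerivAt_of_tendsto
    (fun x => hasDerivAt_div_sq_add (x := x) (by positivity)) (integrable_sub_sq_div_sq_add_sq hc)
    ((tendsto_div_sq_add_cocompact hc.le).mono_left atBot_le_cocompact)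
    ((tendsto_div_sq_add_cocompact hc.le).mono_left atTop_le_cocompact)
  simpa using this

end

lemma norm_BP_sq_sub_one (t x : ℝ) :
    ‖BP t x‖ ^ 2 - 1 = 4 * ((1 + 4 * t ^ 2) / 2 - x ^ 2) / (x ^ 2 + (1 + 4 * t ^ 2) / 2) ^ 2 := by
  have hD : 0 < 1 + 4 * t ^ 2 + 2 * x ^ 2 := by positivity
  have hprofile : 1 - 4 * (1 + 2 * I * t) / (1 + 4 * (t:ℂ)^2 + 2 * (x:ℂ)^2)
      = ((1 - 4 / (1 + 4 * t ^ 2 + 2 * x ^ 2) : ℝ) : ℂ)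
        + ((-8 * t / (1 + 4 * t ^ 2 + 2 * x ^ 2) : ℝ) : ℂ) * I := by
    have : (1 + 4 * (t:ℂ)^2 + 2 * (x:ℂ)^2) ≠ 0 := by exact_mod_cast hD.ne'
    push_cast
    field_simp
    ring
  rw [BP, norm_mul, norm_exp_I_mul_ofReal, one_mul, hprofile, Complex.sq_norm, normSq_add_mul_I]
  field_simp
  ring

theorem peregrine_zero_mass (t : ℝ) :
    ∫ x : ℝ, ((‖BP t x‖)^2 - 1) = 0 := by
  simp_rw [norm_BP_sq_sub_one, mul_div_assoc, integral_const_mul]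
  rw [integral_sub_sq_div_sq_add_sq (by positivity), mul_zero]
end

section
/- The Peregrine breather B_P satisfies E[B_P] = ∫_ℝ |∂_x B_P|² dx - (1/2)∫_ℝ (|B_P|² - 1)² dx = 0 for every t ∈ ℝ. -/
open Complex

/-!
Write `a = 1 + 4 t²`. Then `|∂ₓB_P|² = 256 a x² / (a + 2x²)⁴` and
`|B_P|² - 1 = 8 (a - 2x²) / (a + 2x²)²`, and the energy density
`|∂ₓB_P|² - (|B_P|² - 1)² / 2` is the exact derivative of the rational function
`(64/3 x³ - 32 a x) / (a + 2x²)³`, which vanishes at `±∞`.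
-/

namespace Peregrine

open MeasureTheory

variable {a : ℝ}

noncomputable def kineticDensity (a x : ℝ) : ℝ := 256 * a * x ^ 2 / (a + 2 * x ^ 2) ^ 4

noncomputable def potentialDensity (a x : ℝ) : ℝ :=
  (8 * (a - 2 * x ^ 2) / (a + 2 * x ^ 2) ^ 2) ^ 2

noncomputable def energyPotential (a x : ℝ) : ℝ :=
  (64 / 3 * x ^ 3 - 32 * a * x) / (a + 2 * x ^ 2) ^ 3

theorem hasDerivAt_energyPotential (ha : 0 < a) (x : ℝ) :
    HasDerivAt (energyPotential a) (kineticDensity a x - 1 / 2 * potentialDensity a x) x := by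
  have hD : a + 2 * x ^ 2 ≠ 0 := by positivity
  have hnum : HasDerivAt (fun y : ℝ => 64 / 3 * y ^ 3 - 32 * a * y) (64 * x ^ 2 - 32 * a) x := by
    refine (((hasDerivAt_pow 3 x).const_mul (64 / 3)).sub
      ((hasDerivAt_id x).const_mul (32 * a))).congr_deriv ?_
    push_cast; ring
  have hden : HasDerivAt (fun y : ℝ => (a + 2 * y ^ 2) ^ 3)
      (3 * (a + 2 * x ^ 2) ^ 2 * (4 * x)) x := by
    refine ((((hasDerivAt_pow 2 x).const_mul 2).const_add a).pow 3).congr_deriv ?_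
    push_cast; ring
  refine (hnum.div hden (pow_ne_zero 3 hD)).congr_deriv ?_
  simp only [kineticDensity, potentialDensity]
  field_simp
  ring

theorem energyPotential_neg (x : ℝ) : energyPotential a (-x) = -energyPotential a x := by
  simp only [energyPotential]; ring

theorem tendsto_energyPotential_atTop :
    Filter.Tendsto (energyPotential a) Filter.atTop (nhds 0) := by
  open Polynomial in
  have hdeg : (C (64 / 3 : ℝ) * X ^ 3 - C (32 * a) * X).degree
      < ((C a + C 2 * X ^ 2) ^ 3).degree := by
    have h3 : (C (64 / 3 : ℝ) * X ^ 3 - C (32 * a) * X).degree ≤ 3 := by compute_degree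
    have h6 : ((C a + C (2 : ℝ) * X ^ 2) ^ 3).degree = 6 := by compute_degree!
    exact h6 ▸ h3.trans_lt (by norm_num)
  convert Polynomial.div_tendsto_atTop_zero_of_degree_lt _ _ hdeg using 2 with x
  simp [energyPotential]

theorem tendsto_energyPotential_atBot :
    Filter.Tendsto (energyPotential a) Filter.atBot (nhds 0) := by
  have h := (tendsto_energyPotential_atTop (a := a)).comp Filter.tendsto_neg_atBot_atTop
  simpa [Function.comp_def, energyPotential_neg] using h.neg

theorem integrable_inv_add_two_mul_sq_sq (ha : 1 ≤ a) :
    Integrable fun x : ℝ => ((a + 2 * x ^ 2) ^ 2)⁻¹ := by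
  refine integrable_inv_one_add_sq.mono' (by fun_prop) (Filter.Eventually.of_forall fun x => ?_)
  rw [Real.norm_of_nonneg (by positivity)]
  gcongr
  nlinarith [sq_nonneg x]

theorem integrable_kineticDensity (ha : 1 ≤ a) : Integrable (kineticDensity a) := by
  refine ((integrable_inv_add_two_mul_sq_sq ha).const_mul 128).mono'
    (by unfold kineticDensity; fun_prop : Measurable _).aestronglyMeasurable
    (Filter.Eventually.of_forall fun x => ?_)
  rw [kineticDensity, Real.norm_of_nonneg (by positivity), ← div_eq_mul_inv,
    div_le_div_iff₀ (by positivity) (by positivity)]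
  calc 256 * a * x ^ 2 * (a + 2 * x ^ 2) ^ 2 = 128 * (a * (2 * x ^ 2)) * (a + 2 * x ^ 2) ^ 2 := by
        ring
    _ ≤ 128 * ((a + 2 * x ^ 2) * (a + 2 * x ^ 2)) * (a + 2 * x ^ 2) ^ 2 := by
        gcongr <;> nlinarith [sq_nonneg x]
    _ = 128 * (a + 2 * x ^ 2) ^ 4 := by ring

theorem integrable_potentialDensity (ha : 1 ≤ a) : Integrable (potentialDensity a) := by
  refine ((integrable_inv_add_two_mul_sq_sq ha).const_mul 64).mono'
    (by unfold potentialDensity; fun_prop : Measurable _).aestronglyMeasurable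
    (Filter.Eventually.of_forall fun x => ?_)
  have hsq : (a - 2 * x ^ 2) ^ 2 ≤ (a + 2 * x ^ 2) ^ 2 := by nlinarith [sq_nonneg x]
  rw [potentialDensity, Real.norm_of_nonneg (by positivity), div_pow, ← div_eq_mul_inv,
    div_le_div_iff₀ (by positivity) (by positivity)]
  calc (8 * (a - 2 * x ^ 2)) ^ 2 * (a + 2 * x ^ 2) ^ 2
      = 64 * (a - 2 * x ^ 2) ^ 2 * (a + 2 * x ^ 2) ^ 2 := by ring
    _ ≤ 64 * (a + 2 * x ^ 2) ^ 2 * (a + 2 * x ^ 2) ^ 2 := by gcongr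
    _ = 64 * ((a + 2 * x ^ 2) ^ 2) ^ 2 := by ring

theorem integral_kineticDensity_sub_potentialDensity (ha : 1 ≤ a) :
    (∫ x, kineticDensity a x) - 1 / 2 * ∫ x, potentialDensity a x = 0 := by
  have hk := integrable_kineticDensity ha
  have hp := (integrable_potentialDensity ha).const_mul (1 / 2)
  rw [← integral_const_mul, ← integral_sub hk hp]
  simpa using integral_of_hasDerivAt_of_tendsto (hasDerivAt_energyPotential (by linarith))
    (hk.sub hp) tendsto_energyPotential_atBot tendsto_energyPotential_atTop

theorem BP_eq_exp_mul (t x : ℝ) :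
    BP t x = exp (I * t) *
      (1 - 4 * (1 + 2 * I * t) * (((1 + 4 * t ^ 2 + 2 * x ^ 2)⁻¹ : ℝ) : ℂ)) := by
  rw [BP, div_eq_mul_inv]
  push_cast
  rfl

theorem hasDerivAt_BP (t x : ℝ) :
    HasDerivAt (BP t) (exp (I * t) * (4 * (1 + 2 * I * t)) *
      ((4 * x / (1 + 4 * t ^ 2 + 2 * x ^ 2) ^ 2 : ℝ) : ℂ)) x := by
  have hD : HasDerivAt (fun y : ℝ => 1 + 4 * t ^ 2 + 2 * y ^ 2) (4 * x) x := by
    refine (((hasDerivAt_pow 2 x).const_mul 2).const_add _).congr_deriv ?_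
    push_cast; ring
  have hinv := (hD.inv (by positivity)).ofReal_comp
  rw [show BP t = _ from funext (BP_eq_exp_mul t)]
  refine (((hinv.const_mul (4 * (1 + 2 * I * t))).const_sub 1).const_mul
    (exp (I * t))).congr_deriv ?_
  push_cast
  ring

theorem norm_pdx_BP_sq (t x : ℝ) : ‖pdx BP t x‖ ^ 2 = kineticDensity (1 + 4 * t ^ 2) x := by
  have hc : ‖(4 : ℂ) * (1 + 2 * I * t)‖ ^ 2 = 16 * (1 + 4 * t ^ 2) := by
    have hre : (1 + 2 * I * t : ℂ) = (1 : ℝ) + (2 * t : ℝ) * I := by push_cast; ring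
    rw [norm_mul, mul_pow, hre, Complex.sq_norm (_ + _), Complex.normSq_add_mul_I]
    norm_num
    ring
  rw [pdx, (hasDerivAt_BP t x).deriv, norm_mul, norm_mul, norm_exp_I_mul_ofReal, one_mul, mul_pow,
    hc, Complex.norm_real, Real.norm_eq_abs, sq_abs, kineticDensity]
  field_simp
  ring

theorem norm_BP_sq_sub_one (t x : ℝ) :
    ‖BP t x‖ ^ 2 - 1 = 8 * (1 + 4 * t ^ 2 - 2 * x ^ 2) / (1 + 4 * t ^ 2 + 2 * x ^ 2) ^ 2 := by
  have hD : 1 + 4 * t ^ 2 + 2 * x ^ 2 ≠ 0 := by positivity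
  have hw : BP t x = exp (I * t) * (((1 - 4 / (1 + 4 * t ^ 2 + 2 * x ^ 2) : ℝ) : ℂ)
      + ((-8 * t / (1 + 4 * t ^ 2 + 2 * x ^ 2) : ℝ) : ℂ) * I) := by
    rw [BP_eq_exp_mul]
    push_cast
    ring
  rw [hw, norm_mul, norm_exp_I_mul_ofReal, one_mul, Complex.sq_norm, Complex.normSq_add_mul_I]
  field_simp
  ring

end Peregrine

theorem peregrine_zero_energy (t : ℝ) :
    (∫ x : ℝ, ‖pdx BP t x‖^2) - (1/2) * ∫ x : ℝ, ((‖BP t x‖)^2 - 1)^2 = 0 := by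
  simp only [Peregrine.norm_pdx_BP_sq, Peregrine.norm_BP_sq_sub_one]
  exact Peregrine.integral_kineticDensity_sub_potentialDensity (by nlinarith [sq_nonneg t])
end

section
/- The Peregrine breather B = B_P satisfies, for every (t,x) ∈ ℝ², the fourth-order nonlinear ODE in x: B_{xxxx} + 3 B_x² B̄ + (4|B|² - 3) B_{xx} + B² B̄_{xx} + 2|B_x|² B + (3/2)(|B|² - 1)² B = 0, where B̄ denotes complex conjugation. -/
open Complex

/-!
The left-hand side is equivariant under constant phases: multiplying `B` and its derivatives by
`e` with `|e| = 1` multiplies it by `e`. Writing `B = e^{it} (1 - a ρ)` with `a = 4(1 + 2it)`,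
`ρ(x) = 1 / (d + 2x²)` and `d = 1 + 4t²`, every `x`-derivative of `B` is `-e^{it} a` times the
corresponding derivative of the real profile `ρ`, and `conj a = 8 - a`, `a · conj a = 16 d`.
Eliminating `conj a` and `d`, the claim becomes a rational identity in `a` and `x` alone.
-/

open ComplexConjugate

noncomputable def ellipticOp (B B₁ B₂ B₄ : ℂ) : ℂ :=
  B₄ + 3 * B₁ ^ 2 * conj B + (4 * (‖B‖ : ℂ) ^ 2 - 3) * B₂ + B ^ 2 * conj B₂
    + 2 * (‖B₁‖ : ℂ) ^ 2 * B + (3 / 2) * ((‖B‖ : ℂ) ^ 2 - 1) ^ 2 * B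

theorem ellipticOp_eq_mul_conj (B B₁ B₂ B₄ : ℂ) :
    ellipticOp B B₁ B₂ B₄ = B₄ + 3 * B₁ ^ 2 * conj B + (4 * (B * conj B) - 3) * B₂
      + B ^ 2 * conj B₂ + 2 * (B₁ * conj B₁) * B + (3 / 2) * (B * conj B - 1) ^ 2 * B := by
  simp only [ellipticOp, mul_conj']

theorem ellipticOp_mul_of_norm_eq_one {e : ℂ} (he : ‖e‖ = 1) (B B₁ B₂ B₄ : ℂ) :
    ellipticOp (e * B) (e * B₁) (e * B₂) (e * B₄) = e * ellipticOp B B₁ B₂ B₄ := by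
  have he' : e * conj e = 1 := by rw [mul_conj', he]; norm_num
  simp only [ellipticOp, norm_mul, he, one_mul, map_mul]
  linear_combination (3 * e * B₁ ^ 2 * conj B + e * B ^ 2 * conj B₂) * he'

theorem hasDerivAt_div_pow_quadratic {p : ℝ → ℝ} {p' x : ℝ} (d : ℝ) (n : ℕ)
    (hp : HasDerivAt p p' x) (hx : d + 2 * x ^ 2 ≠ 0) :
    HasDerivAt (fun y => p y / (d + 2 * y ^ 2) ^ n)
      ((p' * (d + 2 * x ^ 2) - 4 * n * x * p x) / (d + 2 * x ^ 2) ^ (n + 1)) x := by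
  have hD : HasDerivAt (fun y => d + 2 * y ^ 2) (4 * x) x :=
    (((hasDerivAt_pow 2 x).const_mul 2).const_add d).congr_deriv (by ring)
  refine (hp.fun_div (hD.fun_pow n) (pow_ne_zero n hx)).congr_deriv ?_
  rcases n with _ | n
  · simp [hx]
  · field_simp
    push_cast
    ring

section Profile

variable {d : ℝ} (hd : 0 < d) (x : ℝ)
include hd

theorem hasDerivAt_profile :
    HasDerivAt (fun y => 1 / (d + 2 * y ^ 2)) (-4 * x / (d + 2 * x ^ 2) ^ 2) x := by
  convert hasDerivAt_div_pow_quadratic d 1 (hasDerivAt_const x (1 : ℝ)) (by positivity)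
    using 1 <;> simp

theorem hasDerivAt_profile_deriv :
    HasDerivAt (fun y => -4 * y / (d + 2 * y ^ 2) ^ 2)
      ((24 * x ^ 2 - 4 * d) / (d + 2 * x ^ 2) ^ 3) x := by
  refine (hasDerivAt_div_pow_quadratic d 2 ((hasDerivAt_id' x).const_mul (-4))
    (by positivity)).congr_deriv ?_
  push_cast
  ring

theorem hasDerivAt_profile_deriv2 :
    HasDerivAt (fun y => (24 * y ^ 2 - 4 * d) / (d + 2 * y ^ 2) ^ 3)
      ((96 * d * x - 192 * x ^ 3) / (d + 2 * x ^ 2) ^ 4) x := by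
  refine (hasDerivAt_div_pow_quadratic d 3 (((hasDerivAt_pow 2 x).const_mul 24).sub_const
    (4 * d)) (by positivity)).congr_deriv ?_
  push_cast
  ring

theorem hasDerivAt_profile_deriv3 :
    HasDerivAt (fun y => (96 * d * y - 192 * y ^ 3) / (d + 2 * y ^ 2) ^ 4)
      ((96 * d ^ 2 - 1920 * d * x ^ 2 + 1920 * x ^ 4) / (d + 2 * x ^ 2) ^ 5) x := by
  refine (hasDerivAt_div_pow_quadratic d 4 (((hasDerivAt_id' x).const_mul (96 * d)).fun_sub
    ((hasDerivAt_pow 3 x).const_mul 192)) (by positivity)).congr_deriv ?_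
  field_simp
  push_cast
  ring

end Profile

theorem ellipticOp_profile (a : ℂ) {d x : ℝ} (hsum : a + conj a = 8)
    (hprod : a * conj a = 16 * d) (hx : d + 2 * x ^ 2 ≠ 0) :
    ellipticOp (1 - a * ((1 / (d + 2 * x ^ 2) : ℝ) : ℂ))
      (-a * ((-4 * x / (d + 2 * x ^ 2) ^ 2 : ℝ) : ℂ))
      (-a * (((24 * x ^ 2 - 4 * d) / (d + 2 * x ^ 2) ^ 3 : ℝ) : ℂ))
      (-a * (((96 * d ^ 2 - 1920 * d * x ^ 2 + 1920 * x ^ 4) / (d + 2 * x ^ 2) ^ 5 : ℝ) : ℂ))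
      = 0 := by
  have hconj : conj a = 8 - a := by linear_combination hsum
  have hd : (d : ℂ) = a * (8 - a) / 16 := by linear_combination -hprod / 16 + a * hconj / 16
  rw [ellipticOp_eq_mul_conj]
  simp only [map_sub, map_mul, map_neg, map_one, conj_ofReal, hconj]
  push_cast
  -- `d` is eliminated only after clearing denominators, so that `field_simp` sees them as atoms.
  generalize hD : (d : ℂ) + 2 * (x : ℂ) ^ 2 = D
  have hD0 : D ≠ 0 := by rw [← hD]; exact_mod_cast hx
  field_simp
  rw [← hD, hd]
  ring

theorem pdx_eq_of_hasDerivAt {u : ℝ → ℝ → ℂ} {F : ℝ → ℂ} {F' : ℂ} {t x : ℝ}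
    (hu : ∀ y, u t y = F y) (hF : HasDerivAt F F' x) : pdx u t x = F' := by
  rw [pdx, funext hu]
  exact hF.deriv

section Breather

variable (t y : ℝ)

theorem BP_eq :
    BP t y = cexp (I * t) *
      (1 - 4 * (1 + 2 * I * t) * ((1 / (1 + 4 * t ^ 2 + 2 * y ^ 2) : ℝ) : ℂ)) := by
  rw [BP]
  push_cast
  ring

theorem pdx_BP :
    pdx BP t y = cexp (I * t) *
      (-(4 * (1 + 2 * I * t)) * ((-4 * y / (1 + 4 * t ^ 2 + 2 * y ^ 2) ^ 2 : ℝ) : ℂ)) := by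
  rw [pdx_eq_of_hasDerivAt (BP_eq t)
    ((((hasDerivAt_profile (by positivity) y).ofReal_comp.const_mul _).const_sub 1).const_mul _)]
  ring

theorem pdx_pdx_BP :
    pdx (pdx BP) t y = cexp (I * t) * (-(4 * (1 + 2 * I * t)) *
      (((24 * y ^ 2 - 4 * (1 + 4 * t ^ 2)) / (1 + 4 * t ^ 2 + 2 * y ^ 2) ^ 3 : ℝ) : ℂ)) :=
  pdx_eq_of_hasDerivAt (pdx_BP t)
    (((hasDerivAt_profile_deriv (by positivity) y).ofReal_comp.const_mul _).const_mul _)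

theorem pdx_pdx_pdx_BP :
    pdx (pdx (pdx BP)) t y = cexp (I * t) * (-(4 * (1 + 2 * I * t)) *
      (((96 * (1 + 4 * t ^ 2) * y - 192 * y ^ 3) / (1 + 4 * t ^ 2 + 2 * y ^ 2) ^ 4 : ℝ) : ℂ)) :=
  pdx_eq_of_hasDerivAt (pdx_pdx_BP t)
    (((hasDerivAt_profile_deriv2 (by positivity) y).ofReal_comp.const_mul _).const_mul _)

theorem pdx_pdx_pdx_pdx_BP :
    pdx (pdx (pdx (pdx BP))) t y = cexp (I * t) * (-(4 * (1 + 2 * I * t)) *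
      (((96 * (1 + 4 * t ^ 2) ^ 2 - 1920 * (1 + 4 * t ^ 2) * y ^ 2 + 1920 * y ^ 4)
        / (1 + 4 * t ^ 2 + 2 * y ^ 2) ^ 5 : ℝ) : ℂ)) :=
  pdx_eq_of_hasDerivAt (pdx_pdx_pdx_BP t)
    (((hasDerivAt_profile_deriv3 (by positivity) y).ofReal_comp.const_mul _).const_mul _)

end Breather

theorem peregrine_elliptic_equation (t x : ℝ) :
    pdx (pdx (pdx (pdx BP))) t x
      + 3 * (pdx BP t x)^2 * (starRingEnd ℂ) (BP t x)
      + (4 * ((‖BP t x‖ : ℂ))^2 - 3) * pdx (pdx BP) t x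
      + (BP t x)^2 * (starRingEnd ℂ) (pdx (pdx BP) t x)
      + 2 * ((‖pdx BP t x‖ : ℂ))^2 * BP t x
      + (3/2) * (((‖BP t x‖ : ℂ))^2 - 1)^2 * BP t x = 0 := by
  have hconj : conj (4 * (1 + 2 * I * t)) = 4 * (1 - 2 * I * t) := by
    simp only [map_mul, map_add, map_ofNat, map_one, conj_I, conj_ofReal]
    ring
  have hsum : 4 * (1 + 2 * I * t) + conj (4 * (1 + 2 * I * t)) = 8 := by
    rw [hconj]; ring
  have hprod :
      4 * (1 + 2 * I * t) * conj (4 * (1 + 2 * I * t)) = 16 * ((1 + 4 * t ^ 2 : ℝ) : ℂ) := by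
    rw [hconj]; push_cast; linear_combination (-64 * (t : ℂ) ^ 2) * I_sq
  change ellipticOp (BP t x) (pdx BP t x) (pdx (pdx BP) t x) (pdx (pdx (pdx (pdx BP))) t x) = 0
  rw [BP_eq, pdx_BP, pdx_pdx_BP, pdx_pdx_pdx_pdx_BP,
    ellipticOp_mul_of_norm_eq_one (norm_exp_I_mul_ofReal t),
    ellipticOp_profile _ hsum hprod (by positivity), mul_zero]
end
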